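/- arXiv:1910.07706 — 5 statements merged into one kernel-verified Lean document; each statement's English description precedes it below -/
import Mathlib

section
/- For real numbers $a_1,\dots,a_n$ with $n \ge 3$, one has $(a_1+a_2)\sum_{3\le j\le n} a_j + \sum_{3 \le i < j \le n} a_i a_j \le \frac{n-2}{2(n-1)}\big(\sum_{i=1}^n a_i\big)^2$. -/
/-- Lemma 2.4 of Zhang–Zhang–Song: for reals `a 0, …, a (n-1)`,
`n ≥ 3`, `(a₁+a₂) ∑_{3≤j} aⱼ + ∑_{3≤i<j} aᵢaⱼ ≤ (n-2)/(2(n-1)) (∑ aᵢ)²`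
(indices shifted to start at 0). -/
theorem stmt_7 (n : ℕ) (hn : 3 ≤ n) (a : Fin n → ℝ) :
    (a ⟨0, by omega⟩ + a ⟨1, by omega⟩) * (∑ j : Fin n, if 2 ≤ (j : ℕ) then a j else 0)
      + (∑ i : Fin n, ∑ j : Fin n, if 2 ≤ (i : ℕ) ∧ i < j then a i * a j else 0)
      ≤ ((n : ℝ) - 2) / (2 * ((n : ℝ) - 1)) * (∑ i, a i) ^ 2 := by
  have hn' : (3:ℝ) ≤ (n:ℝ) := by exact_mod_cast hn
  set s : Finset (Fin n) := Finset.univ.filter (fun j : Fin n => 2 ≤ (j:ℕ)) with hs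
  set b : ℝ := a ⟨0, by omega⟩ + a ⟨1, by omega⟩ with hb
  set T : ℝ := ∑ j : Fin n, if 2 ≤ (j : ℕ) then a j else 0 with hT
  set D : ℝ := ∑ i : Fin n, ∑ j : Fin n, if 2 ≤ (i : ℕ) ∧ i < j then a i * a j else 0 with hD
  set Q : ℝ := ∑ j ∈ s, (a j)^2 with hQ
  have hTs : T = ∑ j ∈ s, a j := by rw [hT, hs, Finset.sum_filter]
  have hpair : Finset.univ.filter (fun j : Fin n => ¬ 2 ≤ (j:ℕ)) =
      ({⟨0, by omega⟩, ⟨1, by omega⟩} : Finset (Fin n)) := by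
    ext j
    simp [Fin.ext_iff]
    omega
  have hrest : (∑ x : Fin n, if ¬ 2 ≤ (x:ℕ) then a x else 0) = b := by
    rw [← Finset.sum_filter, hpair,
      Finset.sum_insert (by simp [Fin.ext_iff]), Finset.sum_singleton, hb]
  have hS : ∑ i, a i = b + T := by
    have h1 : ∀ i ∈ Finset.univ, a i = (if 2 ≤ (i:ℕ) then a i else 0)
        + (if ¬ 2 ≤ (i:ℕ) then a i else 0) := by
      intro i _; by_cases h : 2 ≤ (i:ℕ) <;> simp [h]
    rw [Finset.sum_congr rfl h1, Finset.sum_add_distrib, hrest, ← hT]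
    ring
  have hcard : (s.card : ℝ) = (n:ℝ) - 2 := by
    have h2 : (Finset.univ.filter (fun j : Fin n => ¬ 2 ≤ (j:ℕ))).card = 2 := by
      rw [hpair, Finset.card_insert_of_notMem (by simp [Fin.ext_iff]), Finset.card_singleton]
    have h3 := Finset.card_filter_add_card_filter_not
      (s := (Finset.univ : Finset (Fin n))) (p := fun j : Fin n => 2 ≤ (j:ℕ))
    simp only [Finset.card_univ, Fintype.card_fin] at h3
    have h4 : s.card = n - 2 := by rw [hs]; omega
    rw [h4]
    have h5 : (2:ℕ) ≤ n := by omega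
    push_cast [Nat.cast_sub h5]
    ring
  have hCS : T^2 ≤ ((n:ℝ) - 2) * Q := by
    rw [hTs, ← hcard, hQ]
    exact_mod_cast sq_sum_le_card_mul_sum_sq (s := s) (f := a)
  -- D equals the strict upper-triangular sum over s × s
  have step1 : ∀ i ∈ s, (∑ j ∈ s, if i < j then a i * a j else 0)
      = ∑ j : Fin n, if 2 ≤ (i:ℕ) ∧ i < j then a i * a j else 0 := by
    intro i hi
    have h2i : 2 ≤ (i:ℕ) := (Finset.mem_filter.mp hi).2
    calc (∑ j ∈ s, if i < j then a i * a j else 0)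
        = ∑ j ∈ s, if 2 ≤ (i:ℕ) ∧ i < j then a i * a j else 0 := by
          apply Finset.sum_congr rfl; intro j _; simp [h2i]
      _ = ∑ j : Fin n, if 2 ≤ (i:ℕ) ∧ i < j then a i * a j else 0 := by
          apply Finset.sum_subset (Finset.subset_univ s)
          intro j _ hj
          have hj2 : ¬ 2 ≤ (j:ℕ) := by
            intro h; exact hj (Finset.mem_filter.mpr ⟨Finset.mem_univ j, h⟩)
          have : ¬ i < j := by
            intro h; rw [Fin.lt_def] at h; omega
          simp [this]
  have hDeq : D = ∑ i ∈ s, ∑ j ∈ s, if i < j then a i * a j else 0 := by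
    have houter : (∑ i ∈ s, ∑ j : Fin n, if 2 ≤ (i:ℕ) ∧ i < j then a i * a j else 0)
        = ∑ i : Fin n, ∑ j : Fin n, if 2 ≤ (i:ℕ) ∧ i < j then a i * a j else 0 := by
      apply Finset.sum_subset (Finset.subset_univ s)
      intro i _ hi
      have hi2 : ¬ 2 ≤ (i:ℕ) := by
        intro h; exact hi (Finset.mem_filter.mpr ⟨Finset.mem_univ i, h⟩)
      apply Finset.sum_eq_zero
      intro j _
      simp [hi2]
    rw [hD, ← houter]
    exact (Finset.sum_congr rfl step1).symm
  have hsq : T^2 = Q + 2 * D := by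
    have hexp : T^2 = ∑ i ∈ s, ∑ j ∈ s, a i * a j := by
      rw [hTs, sq, Finset.sum_mul_sum]
    have hsplit : ∀ i ∈ s, ∀ j ∈ s, a i * a j =
        (if i < j then a i * a j else 0) + (if i = j then a i * a j else 0)
          + (if j < i then a i * a j else 0) := by
      intro i _ j _
      rcases lt_trichotomy i j with h | h | h
      · simp [h, h.ne, not_lt.mpr h.le]
      · simp [h]
      · simp [h, h.ne', not_lt.mpr h.le]
    have hexp2 : T^2 = (∑ i ∈ s, ∑ j ∈ s, if i < j then a i * a j else 0)
        + (∑ i ∈ s, ∑ j ∈ s, if i = j then a i * a j else 0)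
        + (∑ i ∈ s, ∑ j ∈ s, if j < i then a i * a j else 0) := by
      rw [hexp,
        Finset.sum_congr rfl (fun i hi => Finset.sum_congr rfl (fun j hj => hsplit i hi j hj))]
      simp [Finset.sum_add_distrib]
    have hdiag : (∑ i ∈ s, ∑ j ∈ s, if i = j then a i * a j else 0) = Q := by
      rw [hQ]
      apply Finset.sum_congr rfl
      intro i hi
      rw [Finset.sum_ite_eq _ i (fun j => a i * a j), if_pos hi, sq]
    have hswap : (∑ i ∈ s, ∑ j ∈ s, if j < i then a i * a j else 0)
        = (∑ i ∈ s, ∑ j ∈ s, if i < j then a i * a j else 0) := by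
      rw [Finset.sum_comm]
      exact Finset.sum_congr rfl fun i _ =>
        Finset.sum_congr rfl fun j _ => by rw [mul_comm]
    rw [hexp2, hdiag, hswap, ← hDeq]
    ring
  -- final polynomial inequality
  rw [hS]
  rw [div_mul_eq_mul_div, le_div_iff₀ (by nlinarith : (0:ℝ) < 2 * ((n:ℝ) - 1))]
  have h2pos : (0:ℝ) < (n:ℝ) - 2 := by linarith
  have h9 : (0:ℝ) ≤ ((n:ℝ) - 1) * (((n:ℝ) - 2) * Q - T ^ 2) :=
    mul_nonneg (by linarith) (by linarith [hCS])
  have hid : ((n:ℝ)-2) * (((n:ℝ)-2) * (b+T)^2 - 2*((n:ℝ)-1) * (b*T+D))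
      = (((n:ℝ)-2)*b - T)^2 + ((n:ℝ)-1) * (((n:ℝ)-2)*Q - T^2) := by
    linear_combination ((n:ℝ)-1) * ((n:ℝ)-2) * hsq
  have main : (0:ℝ) ≤ ((n:ℝ)-2) * (((n:ℝ)-2) * (b+T)^2 - 2*((n:ℝ)-1) * (b*T+D)) := by
    rw [hid]; exact add_nonneg (sq_nonneg _) h9
  nlinarith [main, h2pos]
end

section
/- Let $f: \mathbb{R} \to \mathbb{R}$ be a smooth nowhere-zero function and $c_0$ a real constant. Then the system $f'' = \frac{c_0}{2} f$ and $f f'' + (f')^2 - 4 = c_0 f^2$ holds on $\mathbb{R}$ if and only if one of the following: (1) $c_0 = 0$ and $f(t) = \pm 2t + c_1$; (2) $c_0 > 0$ and $f(t) = -\frac{2}{c_2 c_0} e^{\sqrt{c_0/2}\, t} + c_2 e^{-\sqrt{c_0/2}\, t}$ for some $c_2 \neq 0$; (3) $c_0 < 0$ and $f(t) = c_1 \cos(\sqrt{-c_0/2}\, t) + c_2 \sin(\sqrt{-c_0/2}\, t)$ with $c_1^2 + c_2^2 = -8/c_0$. -/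
open Real

private lemma const_of_hasDerivAt_zero {g : ℝ → ℝ}
    (H : ∀ t, HasDerivAt g 0 t) : ∀ t, g t = g 0 := fun t =>
  is_const_of_deriv_eq_zero (fun x => (H x).differentiableAt)
    (fun x => (H x).deriv) t 0

private lemma ode_exp {g : ℝ → ℝ} {a : ℝ}
    (H : ∀ t, HasDerivAt g (a * g t) t) : ∀ t, g t = g 0 * Real.exp (a * t) := by
  have key : ∀ t, g t * Real.exp (-(a * t)) = g 0 := by
    have H0 : ∀ t, HasDerivAt (fun t => g t * Real.exp (-(a * t))) 0 t := by
      intro t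
      have hlin : HasDerivAt (fun t : ℝ => -(a * t)) (-a) t := by
        simpa using (hasDerivAt_id t).const_mul (-a)
      have he : HasDerivAt (fun t => Real.exp (-(a * t))) (Real.exp (-(a*t)) * (-a)) t :=
        hlin.exp
      have := (H t).mul he
      refine this.congr_deriv ?_
      ring
    intro t
    simpa using const_of_hasDerivAt_zero H0 t
  intro t
  have h1 := key t
  have hexp : Real.exp (-(a*t)) * Real.exp (a*t) = 1 := by
    rw [← Real.exp_add]; simp
  calc g t = g t * (Real.exp (-(a*t)) * Real.exp (a*t)) := by rw [hexp]; ring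
    _ = (g t * Real.exp (-(a*t))) * Real.exp (a*t) := by ring
    _ = g 0 * Real.exp (a*t) := by rw [h1]

private lemma ode_osc {h h' : ℝ → ℝ} {ω : ℝ} (hω : ω ≠ 0)
    (H1 : ∀ t, HasDerivAt h (h' t) t)
    (H2 : ∀ t, HasDerivAt h' (-(ω^2) * h t) t)
    (h0 : h 0 = 0) (h0' : h' 0 = 0) : ∀ t, h t = 0 := by
  have HE : ∀ t, HasDerivAt (fun t => (h' t)^2 + ω^2 * (h t)^2) 0 t := by
    intro t
    have e1 := (H2 t).pow 2
    have e2 := ((H1 t).pow 2).const_mul (ω^2)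
    have := e1.add e2
    refine this.congr_deriv ?_
    push_cast
    ring
  have hconst := const_of_hasDerivAt_zero HE
  intro t
  have h1 := hconst t
  have hω2 : 0 < ω^2 := by positivity
  simp only [h0, h0'] at h1
  have hsq : ω ^ 2 * h t ^ 2 = 0 := by nlinarith [sq_nonneg (h' t), sq_nonneg (h t)]
  have : h t ^ 2 = 0 := by
    rcases mul_eq_zero.mp hsq with h' | h'
    · exact absurd h' (ne_of_gt hω2)
    · exact h'
  exact pow_eq_zero_iff (n := 2) (by norm_num) |>.mp this

private lemma derivs_eq {f F1 F2 : ℝ → ℝ}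
    (H1 : ∀ t, HasDerivAt f (F1 t) t) (H2 : ∀ t, HasDerivAt F1 (F2 t) t) :
    (∀ t, deriv f t = F1 t) ∧ (∀ t, deriv (deriv f) t = F2 t) := by
  have e1 : ∀ t, deriv f t = F1 t := fun t => (H1 t).deriv
  refine ⟨e1, fun t => ?_⟩
  have hfe : deriv f = F1 := funext e1
  rw [hfe]
  exact (H2 t).deriv

/-- Theorem 5.1: for a smooth nowhere-zero `f : ℝ → ℝ`, the
system `f'' = (c₀/2)f`, `ff'' + (f')² - 4 = c₀f²` holds iff `f` has one of
the three stated forms depending on the sign of `c₀`. -/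
theorem stmt_12 (f : ℝ → ℝ) (hf : ContDiff ℝ (⊤ : ℕ∞) f) (hf0 : ∀ t, f t ≠ 0) (c0 : ℝ) :
    ((∀ t, deriv (deriv f) t = c0 / 2 * f t) ∧
     (∀ t, f t * deriv (deriv f) t + (deriv f t) ^ 2 - 4 = c0 * (f t) ^ 2)) ↔
    ((c0 = 0 ∧ ∃ c1 : ℝ, (∀ t, f t = 2 * t + c1) ∨ (∀ t, f t = -2 * t + c1)) ∨
     (0 < c0 ∧ ∃ c2 : ℝ, c2 ≠ 0 ∧
        ∀ t, f t = -2 / (c2 * c0) * Real.exp (Real.sqrt (c0 / 2) * t)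
              + c2 * Real.exp (-(Real.sqrt (c0 / 2)) * t)) ∨
     (c0 < 0 ∧ ∃ c1 c2 : ℝ, c1 ^ 2 + c2 ^ 2 = -8 / c0 ∧
        ∀ t, f t = c1 * Real.cos (Real.sqrt (-c0 / 2) * t)
              + c2 * Real.sin (Real.sqrt (-c0 / 2) * t))) := by
  constructor
  · rintro ⟨h1, h2⟩
    have hdf : Differentiable ℝ f := hf.differentiable (by simp)
    have hfinf : ContDiff ℝ (((⊤ : ℕ∞) : WithTop ℕ∞)) f := hf.of_le (by simp)
    have hfd : ContDiff ℝ (((⊤ : ℕ∞) : WithTop ℕ∞)) (deriv f) := (contDiff_infty_iff_deriv.mp hfinf).2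
    have hdf' : Differentiable ℝ (deriv f) := hfd.differentiable (by simp)
    have Hf : ∀ t, HasDerivAt f (deriv f t) t := fun t => (hdf t).hasDerivAt
    have Hf' : ∀ t, HasDerivAt (deriv f) (c0/2 * f t) t := fun t => by
      have := (hdf' t).hasDerivAt
      rwa [h1 t] at this
    have h3 : ∀ t, (deriv f t)^2 = c0/2 * (f t)^2 + 4 := by
      intro t
      have h2t := h2 t
      rw [h1 t] at h2t
      linear_combination h2t
    rcases lt_trichotomy c0 0 with hc | hc | hc
    · -- c0 < 0
      right; right
      refine ⟨hc, f 0, deriv f 0 / Real.sqrt (-c0/2), ?_, ?_⟩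
      all_goals {
        set ω := Real.sqrt (-c0/2) with hωdef
        have hω2 : ω^2 = -c0/2 := Real.sq_sqrt (by linarith)
        have hωpos : 0 < ω := Real.sqrt_pos.mpr (by linarith)
        have hωne : ω ≠ 0 := ne_of_gt hωpos
        first
        | · -- the constraint c1² + c2² = -8/c0
            have h30 := h3 0
            have hc0ne : c0 ≠ 0 := ne_of_lt hc
            field_simp
            nlinarith [h30, hω2, sq_nonneg (f 0), sq_nonneg (deriv f 0)]
        | · -- the formula for f
            set c1 := f 0
            set c2 := deriv f 0 / ω
            set g : ℝ → ℝ := fun t => c1 * Real.cos (ω*t) + c2 * Real.sin (ω*t) with hgdef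
            set g' : ℝ → ℝ := fun t => c2*ω*Real.cos (ω*t) - c1*ω*Real.sin (ω*t) with hg'def
            have Hg : ∀ t, HasDerivAt g (g' t) t := by
              intro t
              have hωt : HasDerivAt (fun t : ℝ => ω*t) ω t := by
                simpa using (hasDerivAt_id t).const_mul ω
              have := ((hωt.cos).const_mul c1).add ((hωt.sin).const_mul c2)
              refine this.congr_deriv ?_
              simp [hg'def]; ring
            have Hg' : ∀ t, HasDerivAt g' (-(ω^2) * g t) t := by
              intro t
              have hωt : HasDerivAt (fun t : ℝ => ω*t) ω t := by
                simpa using (hasDerivAt_id t).const_mul ω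
              have := ((hωt.cos).const_mul (c2*ω)).sub ((hωt.sin).const_mul (c1*ω))
              refine this.congr_deriv ?_
              simp [hgdef]; ring
            have Hh : ∀ t, HasDerivAt (fun t => f t - g t) (deriv f t - g' t) t :=
              fun t => (Hf t).sub (Hg t)
            have Hh' : ∀ t, HasDerivAt (fun t => deriv f t - g' t)
                (-(ω^2) * (f t - g t)) t := by
              intro t
              have := (Hf' t).sub (Hg' t)
              refine this.congr_deriv ?_
              have : c0/2 = -(ω^2) := by linarith [hω2]
              rw [this]; ring
            have h0 : f 0 - g 0 = 0 := by simp [hgdef, c1]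
            have h0' : deriv f 0 - g' 0 = 0 := by
              simp [hg'def, c2]
              field_simp
              simp
            have := ode_osc hωne Hh Hh' h0 h0'
            intro t
            have ht := this t
            have : f t = g t := by linarith [ht]
            rw [this]
      }
    · -- c0 = 0
      left
      subst hc
      refine ⟨rfl, f 0, ?_⟩
      have Hc : ∀ t, deriv f t = deriv f 0 := by
        have H0 : ∀ t, HasDerivAt (deriv f) 0 t := by
          intro t
          have := Hf' t
          simpa using this
        exact const_of_hasDerivAt_zero H0
      have hlin : ∀ t, f t = deriv f 0 * t + f 0 := by
        have H0 : ∀ t, HasDerivAt (fun t => f t - deriv f 0 * t) 0 t := by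
          intro t
          have := (Hf t).sub ((hasDerivAt_id t).const_mul (deriv f 0))
          exact this.congr_deriv (by simp [Hc t])
        intro t
        have := const_of_hasDerivAt_zero H0 t
        simp at this
        linarith
      have hd0 : (deriv f 0)^2 = 4 := by have := h3 0; simpa using this
      have : (deriv f 0 - 2) * (deriv f 0 + 2) = 0 := by nlinarith
      rcases mul_eq_zero.mp this with h | h
      · left; intro t
        have : deriv f 0 = 2 := by linarith
        rw [hlin t, this]
      · right; intro t
        have : deriv f 0 = -2 := by linarith
        rw [hlin t, this]
    · -- 0 < c0
      right; left
      refine ⟨hc, ?_⟩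
      set k := Real.sqrt (c0/2) with hkdef
      have hk2 : k^2 = c0/2 := Real.sq_sqrt (by linarith)
      have hkpos : 0 < k := Real.sqrt_pos.mpr (by linarith)
      have hkne : k ≠ 0 := ne_of_gt hkpos
      have Hgp : ∀ s, HasDerivAt (fun s => deriv f s - k * f s)
          (-k * (deriv f s - k * f s)) s := by
        intro s
        have := (Hf' s).sub ((Hf s).const_mul k)
        refine this.congr_deriv ?_
        linear_combination (-(f s)) * hk2
      have Hgm : ∀ s, HasDerivAt (fun s => deriv f s + k * f s)
          (k * (deriv f s + k * f s)) s := by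
        intro s
        have := (Hf' s).add ((Hf s).const_mul k)
        refine this.congr_deriv ?_
        linear_combination (-(f s)) * hk2
      have e1 : ∀ s, deriv f s - k * f s = (deriv f 0 - k * f 0) * Real.exp (-k*s) :=
        ode_exp Hgp
      have e2 : ∀ s, deriv f s + k * f s = (deriv f 0 + k * f 0) * Real.exp (k*s) :=
        ode_exp Hgm
      have hprod : (deriv f 0 - k * f 0) * (deriv f 0 + k * f 0) = 4 := by
        linear_combination h3 0 - (f 0)^2 * hk2
      have hgp0 : deriv f 0 - k * f 0 ≠ 0 := by
        intro h
        rw [h] at hprod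
        norm_num at hprod
      have hc0ne : c0 ≠ 0 := ne_of_gt hc
      have h2k : (2*k) ≠ 0 := by positivity
      refine ⟨-(deriv f 0 - k * f 0)/(2*k), ?_, ?_⟩
      · intro h
        have : deriv f 0 - k * f 0 = 0 := by
          field_simp at h
          linarith
        exact hgp0 this
      · intro t
        have hft : 2*k*f t = (deriv f 0 + k * f 0) * Real.exp (k*t)
            - (deriv f 0 - k * f 0) * Real.exp (-k*t) := by
          linear_combination e2 t - e1 t
        have hden : (-(deriv f 0 - k * f 0)/(2*k)) * c0 ≠ 0 := by
          apply mul_ne_zero _ hc0ne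
          rw [div_ne_zero_iff]
          exact ⟨neg_ne_zero.mpr hgp0, h2k⟩
        have hgp0' : k * f 0 - deriv f 0 ≠ 0 := fun h => hgp0 (by linarith)
        rw [neg_mul] at hft
        rw [eq_comm]
        field_simp
        linear_combination (-((deriv f 0 - k * f 0) * c0)) * hft
          + (8 * Real.exp (k*t)) * hk2 + (-(c0 * Real.exp (k*t))) * hprod
  · rintro (⟨hc, c1, hfe | hfe⟩ | ⟨hc, c2, hc2, hfe⟩ | ⟨hc, c1, c2, hcc, hfe⟩)
    · -- c0 = 0, f = 2t + c1
      subst hc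
      have hfun : f = fun t => 2*t + c1 := funext hfe
      have H1 : ∀ t, HasDerivAt f ((fun _ : ℝ => (2:ℝ)) t) t := by
        intro t
        rw [hfun]
        simpa using ((hasDerivAt_id t).const_mul (2:ℝ)).add_const c1
      have H2 : ∀ t, HasDerivAt (fun _ : ℝ => (2:ℝ)) ((fun _ : ℝ => (0:ℝ)) t) t :=
        fun t => hasDerivAt_const t 2
      obtain ⟨e1, e2⟩ := derivs_eq H1 H2
      constructor
      · intro t; rw [e2 t]; ring
      · intro t; rw [e1 t, e2 t]; ring
    · -- c0 = 0, f = -2t + c1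
      subst hc
      have hfun : f = fun t => -2*t + c1 := funext hfe
      have H1 : ∀ t, HasDerivAt f ((fun _ : ℝ => (-2:ℝ)) t) t := by
        intro t
        rw [hfun]
        simpa using ((hasDerivAt_id t).const_mul (-2:ℝ)).add_const c1
      have H2 : ∀ t, HasDerivAt (fun _ : ℝ => (-2:ℝ)) ((fun _ : ℝ => (0:ℝ)) t) t :=
        fun t => hasDerivAt_const t (-2)
      obtain ⟨e1, e2⟩ := derivs_eq H1 H2
      constructor
      · intro t; rw [e2 t]; ring
      · intro t; rw [e1 t, e2 t]; ring
    · -- 0 < c0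
      set k := Real.sqrt (c0/2) with hkdef
      have hk2 : k^2 = c0/2 := Real.sq_sqrt (by linarith)
      have hkpos : 0 < k := Real.sqrt_pos.mpr (by linarith)
      set A := -2/(c2*c0) with hA
      have hfun : f = fun t => A * Real.exp (k*t) + c2 * Real.exp (-k*t) := funext hfe
      have H1 : ∀ t, HasDerivAt f
          ((fun t => A*k*Real.exp (k*t) - c2*k*Real.exp (-k*t)) t) t := by
        intro t
        rw [hfun]
        have hkt : HasDerivAt (fun t : ℝ => k*t) k t := by
          simpa using (hasDerivAt_id t).const_mul k
        have hmkt : HasDerivAt (fun t : ℝ => -k*t) (-k) t := by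
          simpa using (hasDerivAt_id t).const_mul (-k)
        have := (hkt.exp.const_mul A).add (hmkt.exp.const_mul c2)
        refine this.congr_deriv ?_
        ring
      have H2 : ∀ t, HasDerivAt (fun t => A*k*Real.exp (k*t) - c2*k*Real.exp (-k*t))
          ((fun t => A*k^2*Real.exp (k*t) + c2*k^2*Real.exp (-k*t)) t) t := by
        intro t
        have hkt : HasDerivAt (fun t : ℝ => k*t) k t := by
          simpa using (hasDerivAt_id t).const_mul k
        have hmkt : HasDerivAt (fun t : ℝ => -k*t) (-k) t := by
          simpa using (hasDerivAt_id t).const_mul (-k)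
        have := (hkt.exp.const_mul (A*k)).sub (hmkt.exp.const_mul (c2*k))
        refine this.congr_deriv ?_
        ring
      obtain ⟨e1, e2⟩ := derivs_eq H1 H2
      have hAc : A * c2 * c0 = -2 := by
        rw [hA]
        field_simp
      have hc0ne : c0 ≠ 0 := ne_of_gt hc
      constructor
      · intro t
        rw [e2 t, hfe t]
        linear_combination (A*Real.exp (k*t) + c2*Real.exp (-k*t)) * hk2
      · intro t
        rw [e1 t, e2 t, hfe t]
        have huv : Real.exp (k*t) * Real.exp (-k*t) = 1 := by
          rw [← Real.exp_add]
          ring_nf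
          exact Real.exp_zero
        linear_combination (2*(A^2*(Real.exp (k*t))^2 + c2^2*(Real.exp (-k*t))^2)) * hk2
          + (-2*c0*A*c2) * huv + (-2) * hAc
    · -- c0 < 0
      set ω := Real.sqrt (-c0/2) with hωdef
      have hω2 : ω^2 = -c0/2 := Real.sq_sqrt (by linarith)
      have hωpos : 0 < ω := Real.sqrt_pos.mpr (by linarith)
      have hc0ne : c0 ≠ 0 := ne_of_lt hc
      have hfun : f = fun t => c1 * Real.cos (ω*t) + c2 * Real.sin (ω*t) := funext hfe
      have H1 : ∀ t, HasDerivAt f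
          ((fun t => c2*ω*Real.cos (ω*t) - c1*ω*Real.sin (ω*t)) t) t := by
        intro t
        rw [hfun]
        have hωt : HasDerivAt (fun t : ℝ => ω*t) ω t := by
          simpa using (hasDerivAt_id t).const_mul ω
        have := ((hωt.cos).const_mul c1).add ((hωt.sin).const_mul c2)
        refine this.congr_deriv ?_
        ring
      have H2 : ∀ t, HasDerivAt (fun t => c2*ω*Real.cos (ω*t) - c1*ω*Real.sin (ω*t))
          ((fun t => -(ω^2) * (c1 * Real.cos (ω*t) + c2 * Real.sin (ω*t))) t) t := by
        intro t
        have hωt : HasDerivAt (fun t : ℝ => ω*t) ω t := by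
          simpa using (hasDerivAt_id t).const_mul ω
        have := ((hωt.cos).const_mul (c2*ω)).sub ((hωt.sin).const_mul (c1*ω))
        refine this.congr_deriv ?_
        ring
      obtain ⟨e1, e2⟩ := derivs_eq H1 H2
      have hcc' : c0 * (c1^2 + c2^2) = -8 := by
        rw [hcc]
        field_simp
      constructor
      · intro t
        rw [e2 t, hfe t]
        linear_combination (-(c1 * Real.cos (ω*t) + c2 * Real.sin (ω*t))) * hω2
      · intro t
        rw [e1 t, e2 t, hfe t]
        have hsc : Real.sin (ω*t)^2 + Real.cos (ω*t)^2 = 1 := Real.sin_sq_add_cos_sq _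
        linear_combination
          (-2*(c1 * Real.cos (ω*t) + c2 * Real.sin (ω*t))^2
            + (c1^2+c2^2)*((Real.cos (ω*t))^2 + (Real.sin (ω*t))^2)) * hω2
          + (-(c0/2)*(c1^2+c2^2)) * hsc + (-(1:ℝ)/2) * hcc'
end

section
/- Let $f: \mathbb{R} \to \mathbb{R}$ be a smooth nowhere-zero function and $c_0 \in \mathbb{R}$. The system $f'' = \frac{c_0}{2}f$ and $f f'' + (f')^2 = c_0 f^2$ holds on $\mathbb{R}$ if and only if: (1) $c_0 = 0$ and $f$ is a nonzero constant, or (2) $c_0 > 0$ and $f(t) = c_1 e^{\sqrt{c_0/2}\,t}$ or $f(t) = c_2 e^{-\sqrt{c_0/2}\,t}$ for a nonzero constant $c_1$ or $c_2$. In particular, there is no solution with $c_0 < 0$. -/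
lemma expDeriv (c a : ℝ) :
    deriv (fun t => c * Real.exp (a * t)) = fun t => c * a * Real.exp (a * t) := by
  funext t
  have h := (((hasDerivAt_id t).const_mul a).exp).const_mul c
  have h' : HasDerivAt (fun t : ℝ => c * Real.exp (a * t)) (c * (Real.exp (a * t) * a)) t := by
    simpa using h
  rw [h'.deriv]; ring

lemma ode_sol (f : ℝ → ℝ) (hd : Differentiable ℝ f) (a : ℝ)
    (h : ∀ t, deriv f t = a * f t) : ∀ t, f t = f 0 * Real.exp (a * t) := by
  have hF : ∀ t, HasDerivAt (fun t => f t * Real.exp (-a * t)) 0 t := by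
    intro t
    have h1 := (hd t).hasDerivAt
    have h2 : HasDerivAt (fun t : ℝ => Real.exp (-a * t)) (Real.exp (-a * t) * (-a * 1)) t :=
      ((hasDerivAt_id t).const_mul (-a)).exp
    have h3 := h1.mul h2
    exact h3.congr_deriv (by rw [h t]; ring)
  have hconst : ∀ t, f t * Real.exp (-a * t) = f 0 := by
    intro t
    have := is_const_of_deriv_eq_zero (f := fun t => f t * Real.exp (-a * t))
      (fun s => (hF s).differentiableAt) (fun s => (hF s).deriv) t 0
    simpa using this
  intro t
  calc f t = f t * Real.exp (-a * t) * Real.exp (a * t) := by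
        rw [mul_assoc, ← Real.exp_add, neg_mul, neg_add_cancel, Real.exp_zero, mul_one]
    _ = f 0 * Real.exp (a * t) := by rw [hconst t]

lemma exp_checks (c a c0 : ℝ) (ha : a ^ 2 = c0 / 2) (f : ℝ → ℝ)
    (hfe : ∀ t, f t = c * Real.exp (a * t)) :
    (∀ t, deriv (deriv f) t = c0 / 2 * f t) ∧
    (∀ t, f t * deriv (deriv f) t + (deriv f t) ^ 2 = c0 * (f t) ^ 2) := by
  have hf : f = fun t => c * Real.exp (a * t) := funext hfe
  have hd1 : deriv f = fun t => c * a * Real.exp (a * t) := by rw [hf, expDeriv]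
  have hd2 : deriv (deriv f) = fun t => c * a * a * Real.exp (a * t) := by
    rw [hd1, expDeriv]
  constructor
  · intro t
    rw [hd2, hf]
    simp only
    linear_combination (c * Real.exp (a * t)) * ha
  · intro t
    rw [hd2, hd1, hf]
    simp only
    linear_combination (2 * c ^ 2 * Real.exp (a * t) ^ 2) * ha

/-- Theorem 5.5: for a smooth nowhere-zero `f : ℝ → ℝ`, the
system `f'' = (c₀/2)f`, `ff'' + (f')² = c₀f²` holds iff either `c₀ = 0` and
`f` is a nonzero constant, or `c₀ > 0` and `f` is a nonzero multiple of
`e^{±√(c₀/2) t}`; in particular there is no solution with `c₀ < 0`. -/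
theorem stmt_13 (f : ℝ → ℝ) (hf : ContDiff ℝ (⊤ : ℕ∞) f) (hf0 : ∀ t, f t ≠ 0) (c0 : ℝ) :
    ((∀ t, deriv (deriv f) t = c0 / 2 * f t) ∧
     (∀ t, f t * deriv (deriv f) t + (deriv f t) ^ 2 = c0 * (f t) ^ 2)) ↔
    ((c0 = 0 ∧ ∃ c : ℝ, c ≠ 0 ∧ ∀ t, f t = c) ∨
     (0 < c0 ∧
       ((∃ c1 : ℝ, c1 ≠ 0 ∧ ∀ t, f t = c1 * Real.exp (Real.sqrt (c0 / 2) * t)) ∨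
        (∃ c2 : ℝ, c2 ≠ 0 ∧ ∀ t, f t = c2 * Real.exp (-(Real.sqrt (c0 / 2)) * t))))) := by
  have hd : Differentiable ℝ f := hf.differentiable (by simp)
  constructor
  · rintro ⟨h1, h2⟩
    -- derive (f')² = (c0/2) f²
    have hsq : ∀ t, (deriv f t) ^ 2 = c0 / 2 * (f t) ^ 2 := by
      intro t
      have := h2 t
      rw [h1 t] at this
      nlinarith [this]
    have hfsq : ∀ t, (0:ℝ) < f t ^ 2 := by
      intro t
      have := hf0 t
      positivity
    have hc0 : 0 ≤ c0 := by nlinarith [hsq 0, sq_nonneg (deriv f 0), hfsq 0]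
    rcases eq_or_lt_of_le hc0 with hc0e | hc0p
    · -- c0 = 0
      left
      refine ⟨hc0e.symm, f 0, hf0 0, ?_⟩
      have hz : ∀ t, deriv f t = 0 := by
        intro t
        have := hsq t
        rw [← hc0e] at this
        simpa [pow_eq_zero_iff] using this
      intro t
      exact is_const_of_deriv_eq_zero hd hz t 0
    · -- c0 > 0
      right
      set k := Real.sqrt (c0 / 2) with hk
      have hk2 : k ^ 2 = c0 / 2 := Real.sq_sqrt (by linarith)
      have hkpos : 0 < k := Real.sqrt_pos.mpr (by linarith)
      have hor : ∀ t, deriv f t = k * f t ∨ deriv f t = -k * f t := by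
        intro t
        have hkk : k ^ 2 * f t ^ 2 = c0 / 2 * f t ^ 2 := by rw [hk2]
        have hfac : (deriv f t - k * f t) * (deriv f t + k * f t) = 0 := by
          linear_combination hsq t - hkk
        rcases mul_eq_zero.mp hfac with h | h
        · left; linarith
        · right; linarith
      set g : ℝ → ℝ := fun t => deriv f t / f t with hg
      have hgc : Continuous g :=
        (hf.continuous_deriv (by simp)).div hf.continuous hf0
      have hgval : ∀ t, g t = k ∨ g t = -k := by
        intro t
        rcases hor t with h | h
        · left; simp only [hg]; rw [h, mul_div_assoc, div_self (hf0 t), mul_one]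
        · right; simp only [hg]; rw [h, neg_mul, neg_div, mul_div_assoc, div_self (hf0 t), mul_one]
      have hsame : ∀ s t : ℝ, g s = g t := by
        intro s t
        by_contra hne
        have hiv := intermediate_value_uIcc (a := s) (b := t) hgc.continuousOn
        have h0mem : (0:ℝ) ∈ Set.uIcc (g s) (g t) := by
          rcases hgval s with hs | hs <;> rcases hgval t with ht | ht
          · exact absurd (hs.trans ht.symm) hne
          · rw [hs, ht]; exact Set.mem_uIcc.mpr (Or.inr ⟨by linarith, by linarith⟩)
          · rw [hs, ht]; exact Set.mem_uIcc.mpr (Or.inl ⟨by linarith, by linarith⟩)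
          · exact absurd (hs.trans ht.symm) hne
        obtain ⟨u, _, hu⟩ := hiv h0mem
        rcases hgval u with h | h <;> rw [hu] at h <;> linarith
      have hderiv_eq : ∀ t, deriv f t = g 0 * f t := by
        intro t
        rw [← hsame t 0]
        exact (div_mul_cancel₀ (deriv f t) (hf0 t)).symm
      rcases hgval 0 with h0 | h0
      · refine ⟨hc0p, Or.inl ⟨f 0, hf0 0, ?_⟩⟩
        rw [h0] at hderiv_eq
        exact ode_sol f hd k hderiv_eq
      · refine ⟨hc0p, Or.inr ⟨f 0, hf0 0, ?_⟩⟩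
        rw [h0] at hderiv_eq
        exact ode_sol f hd (-k) hderiv_eq
  · rintro (⟨hc0, c, hc, hfc⟩ | ⟨hc0, ⟨c1, hc1, hfc⟩ | ⟨c2, hc2, hfc⟩⟩)
    · have hfe : f = fun _ => c := funext hfc
      subst hc0
      constructor <;> intro t <;> simp [hfe]
    · exact exp_checks c1 _ c0 (Real.sq_sqrt (by linarith)) f hfc
    · have : (-(Real.sqrt (c0 / 2))) ^ 2 = c0 / 2 := by
        rw [neg_sq, Real.sq_sqrt (by linarith : (0:ℝ) ≤ c0 / 2)]
      exact exp_checks c2 _ c0 this f hfc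
end

section
/- Let $f:\mathbb{R}\to\mathbb{R}$ be smooth and nowhere zero, and $\lambda_0 \in \mathbb{R}$. Set $w = f^{3/2}$ (choosing $f > 0$). Then $4\frac{f''}{f} + 2\frac{(f')^2}{f^2} = \lambda_0$ holds on $\mathbb{R}$ if and only if $w'' = \frac{3}{8}\lambda_0 w$; consequently, the positive solutions are: $\lambda_0 = 0$: $f(t) = (c_2 t + c_1)^{2/3}$; $\lambda_0 > 0$: $f(t) = (c_1 e^{\sqrt{3\lambda_0/8}\,t} + c_2 e^{-\sqrt{3\lambda_0/8}\,t})^{2/3}$; $\lambda_0 < 0$: $f(t) = (c_1 \cos(\sqrt{-3\lambda_0/8}\,t) + c_2\sin(\sqrt{-3\lambda_0/8}\,t))^{2/3}$, on intervals where the inner expression is positive. -/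
private lemma ode_unique14 (μ : ℝ) (g g1 : ℝ → ℝ)
    (hg : ∀ t, HasDerivAt g (g1 t) t) (hg1 : ∀ t, HasDerivAt g1 (μ * g t) t)
    (h0 : g 0 = 0) (h1 : g1 0 = 0) : ∀ t, g t = 0 := by
  have hhd : ∀ t, HasDerivAt (fun s => g s ^ 2 + g1 s ^ 2)
      (2 * g t * g1 t + 2 * g1 t * (μ * g t)) t := by
    intro t
    have := (((hg t).pow 2).add ((hg1 t).pow 2))
    refine this.congr_deriv ?_
    push_cast
    ring
  have hub : ∀ t, 2 * g t * g1 t + 2 * g1 t * (μ * g t)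
      ≤ (1 + |μ|) * (g t ^ 2 + g1 t ^ 2) := by
    intro t
    have h1' := mul_nonneg (sub_nonneg.2 (le_abs_self μ)) (sq_nonneg (g t + g1 t))
    have h2' := mul_nonneg (sub_nonneg.2 (neg_abs_le μ)) (sq_nonneg (g t - g1 t))
    nlinarith [sq_nonneg (g t - g1 t)]
  have hlb : ∀ t, -((1 + |μ|) * (g t ^ 2 + g1 t ^ 2))
      ≤ 2 * g t * g1 t + 2 * g1 t * (μ * g t) := by
    intro t
    have h1' := mul_nonneg (sub_nonneg.2 (le_abs_self μ)) (sq_nonneg (g t - g1 t))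
    have h2' := mul_nonneg (sub_nonneg.2 (neg_abs_le μ)) (sq_nonneg (g t + g1 t))
    nlinarith [sq_nonneg (g t + g1 t)]
  have hzero : ∀ t, g t ^ 2 + g1 t ^ 2 = 0 := by
    intro t
    rcases le_total 0 t with ht | ht
    · have hφd : ∀ s, HasDerivAt (fun s => (g s ^ 2 + g1 s ^ 2) * Real.exp (-(1 + |μ|) * s))
          ((2 * g s * g1 s + 2 * g1 s * (μ * g s)) * Real.exp (-(1 + |μ|) * s)
            + (g s ^ 2 + g1 s ^ 2) * (Real.exp (-(1 + |μ|) * s) * -(1 + |μ|))) s := by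
        intro s
        exact ((hhd s).mul (((hasDerivAt_id s).const_mul (-(1 + |μ|))).exp)).congr_deriv (by simp)
      have hanti : Antitone (fun s => (g s ^ 2 + g1 s ^ 2) * Real.exp (-(1 + |μ|) * s)) := by
        apply antitone_of_deriv_nonpos
        · exact fun s => (hφd s).differentiableAt
        · intro s
          rw [(hφd s).deriv]
          have := hub s
          have he : (0:ℝ) < Real.exp (-(1 + |μ|) * s) := Real.exp_pos _
          nlinarith
      have hle := hanti ht
      simp only [h0, h1] at hle
      have he : (0:ℝ) < Real.exp (-(1 + |μ|) * t) := Real.exp_pos _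
      nlinarith [sq_nonneg (g t), sq_nonneg (g1 t)]
    · have hψd : ∀ s, HasDerivAt (fun s => (g s ^ 2 + g1 s ^ 2) * Real.exp ((1 + |μ|) * s))
          ((2 * g s * g1 s + 2 * g1 s * (μ * g s)) * Real.exp ((1 + |μ|) * s)
            + (g s ^ 2 + g1 s ^ 2) * (Real.exp ((1 + |μ|) * s) * (1 + |μ|))) s := by
        intro s
        exact ((hhd s).mul (((hasDerivAt_id s).const_mul (1 + |μ|)).exp)).congr_deriv (by simp)
      have hmono : Monotone (fun s => (g s ^ 2 + g1 s ^ 2) * Real.exp ((1 + |μ|) * s)) := by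
        apply monotone_of_deriv_nonneg
        · exact fun s => (hψd s).differentiableAt
        · intro s
          rw [(hψd s).deriv]
          have := hlb s
          have he : (0:ℝ) < Real.exp ((1 + |μ|) * s) := Real.exp_pos _
          nlinarith
      have hle := hmono ht
      simp only [h0, h1] at hle
      have he : (0:ℝ) < Real.exp ((1 + |μ|) * t) := Real.exp_pos _
      nlinarith [sq_nonneg (g t), sq_nonneg (g1 t)]
  intro t
  nlinarith [hzero t, sq_nonneg (g t), sq_nonneg (g1 t)]

private lemma lin_ode14 (μ : ℝ) (w w1 φ φ1 : ℝ → ℝ)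
    (hw : ∀ t, HasDerivAt w (w1 t) t) (hw1 : ∀ t, HasDerivAt w1 (μ * w t) t)
    (hφ : ∀ t, HasDerivAt φ (φ1 t) t) (hφ1 : ∀ t, HasDerivAt φ1 (μ * φ t) t)
    (h0 : w 0 = φ 0) (h1 : w1 0 = φ1 0) : ∀ t, w t = φ t := by
  have key := ode_unique14 μ (fun t => w t - φ t) (fun t => w1 t - φ1 t)
    (fun t => (hw t).sub (hφ t))
    (fun t => by
      have := (hw1 t).sub (hφ1 t)
      refine this.congr_deriv ?_
      ring)
    (by simp [h0]) (by simp [h1])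
  intro t
  have := key t
  simp only [sub_eq_zero] at this
  exact this

private lemma alg14 (a b c u l : ℝ) (hu : 0 < u) (huu : u * u = a) :
    3/2 * (1/2 * u⁻¹ * b * b + u * c) - 3/8 * l * (u * u * u)
      = 3 * a^2 / (8 * u) * (4 * c / a + 2 * b^2 / a^2 - l) := by
  subst huu
  have h : u ≠ 0 := hu.ne'
  field_simp
  ring

/-- Theorem 5.6: for smooth positive `f`, with `w = f^{3/2}`,
the scalar-curvature equation `4f''/f + 2(f')²/f² = λ₀` holds iff
`w'' = (3/8)λ₀ w`; consequently the solutions have the stated forms. -/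
theorem stmt_14 (f : ℝ → ℝ) (hf : ContDiff ℝ (⊤ : ℕ∞) f) (hfpos : ∀ t, 0 < f t) (l : ℝ) :
    ((∀ t, 4 * deriv (deriv f) t / f t + 2 * (deriv f t) ^ 2 / (f t) ^ 2 = l) ↔
      (∀ t, deriv (deriv (fun s => f s ^ ((3 : ℝ) / 2))) t
          = 3 / 8 * l * f t ^ ((3 : ℝ) / 2))) ∧
    ((∀ t, 4 * deriv (deriv f) t / f t + 2 * (deriv f t) ^ 2 / (f t) ^ 2 = l) →
      ((l = 0 → ∃ c1 c2 : ℝ, ∀ t, f t = (c2 * t + c1) ^ ((2 : ℝ) / 3)) ∧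
       (0 < l → ∃ c1 c2 : ℝ, ∀ t, f t =
          (c1 * Real.exp (Real.sqrt (3 * l / 8) * t)
            + c2 * Real.exp (-(Real.sqrt (3 * l / 8)) * t)) ^ ((2 : ℝ) / 3)) ∧
       (l < 0 → ∃ c1 c2 : ℝ, ∀ t, f t =
          (c1 * Real.cos (Real.sqrt (-(3 * l) / 8) * t)
            + c2 * Real.sin (Real.sqrt (-(3 * l) / 8) * t)) ^ ((2 : ℝ) / 3)))) := by
  have hfi : ContDiff ℝ (((⊤:ℕ∞)) : WithTop ℕ∞) f := hf.of_le (by simp)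
  have hdf : Differentiable ℝ f := (contDiff_infty_iff_deriv.mp hfi).1
  have hf' : ContDiff ℝ (((⊤:ℕ∞)) : WithTop ℕ∞) (deriv f) := (contDiff_infty_iff_deriv.mp hfi).2
  have hdd : ∀ t, HasDerivAt (deriv f) (deriv (deriv f) t) t :=
    fun t => ((hf'.differentiable (by simp)) t).hasDerivAt
  have hw1 : ∀ t, HasDerivAt (fun s => f s ^ ((3:ℝ)/2))
      ((3:ℝ)/2 * (f t ^ ((1:ℝ)/2) * deriv f t)) t := by
    intro t
    have h := ((hdf t).hasDerivAt).rpow_const (p := (3:ℝ)/2) (Or.inl (hfpos t).ne')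
    convert h using 1
    rw [show ((3:ℝ)/2 - 1) = (1:ℝ)/2 by norm_num]
    ring
  have hp : ∀ t, HasDerivAt (fun s => f s ^ ((1:ℝ)/2))
      ((1:ℝ)/2 * (f t ^ ((1:ℝ)/2))⁻¹ * deriv f t) t := by
    intro t
    have h := ((hdf t).hasDerivAt).rpow_const (p := (1:ℝ)/2) (Or.inl (hfpos t).ne')
    convert h using 1
    rw [show ((1:ℝ)/2 - 1) = -((1:ℝ)/2) by norm_num,
      Real.rpow_neg (hfpos t).le]
    ring
  have hw2 : ∀ t, HasDerivAt (fun s => (3:ℝ)/2 * (f s ^ ((1:ℝ)/2) * deriv f s))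
      ((3:ℝ)/2 * ((1:ℝ)/2 * (f t ^ ((1:ℝ)/2))⁻¹ * deriv f t * deriv f t
        + f t ^ ((1:ℝ)/2) * deriv (deriv f) t)) t :=
    fun t => ((hp t).mul (hdd t)).const_mul ((3:ℝ)/2)
  have hderivw : deriv (fun s => f s ^ ((3:ℝ)/2))
      = fun t => (3:ℝ)/2 * (f t ^ ((1:ℝ)/2) * deriv f t) := funext fun t => (hw1 t).deriv
  have hdd2 : ∀ t, deriv (deriv (fun s => f s ^ ((3:ℝ)/2))) t
      = (3:ℝ)/2 * ((1:ℝ)/2 * (f t ^ ((1:ℝ)/2))⁻¹ * deriv f t * deriv f t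
        + f t ^ ((1:ℝ)/2) * deriv (deriv f) t) := by
    intro t
    rw [hderivw]
    exact (hw2 t).deriv
  have key : ∀ t, deriv (deriv (fun s => f s ^ ((3:ℝ)/2))) t - 3/8 * l * f t ^ ((3:ℝ)/2)
      = 3 * (f t)^2 / (8 * f t ^ ((1:ℝ)/2))
        * (4 * deriv (deriv f) t / f t + 2 * (deriv f t) ^ 2 / (f t) ^ 2 - l) := by
    intro t
    have ha := hfpos t
    have hu : 0 < f t ^ ((1:ℝ)/2) := Real.rpow_pos_of_pos ha _
    have huu : f t ^ ((1:ℝ)/2) * f t ^ ((1:ℝ)/2) = f t := by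
      rw [← Real.rpow_add ha]; norm_num
    have h32 : f t ^ ((3:ℝ)/2) = f t ^ ((1:ℝ)/2) * f t ^ ((1:ℝ)/2) * f t ^ ((1:ℝ)/2) := by
      rw [← Real.rpow_add ha, ← Real.rpow_add ha]; norm_num
    rw [hdd2 t, h32]
    exact alg14 (f t) (deriv f t) (deriv (deriv f) t) (f t ^ ((1:ℝ)/2)) l hu huu
  have hiff : (∀ t, 4 * deriv (deriv f) t / f t + 2 * (deriv f t) ^ 2 / (f t) ^ 2 = l) ↔
      (∀ t, deriv (deriv (fun s => f s ^ ((3:ℝ)/2))) t = 3 / 8 * l * f t ^ ((3:ℝ)/2)) := by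
    constructor
    · intro H t
      have k := key t
      rw [H t] at k
      simp at k
      linarith
    · intro H t
      have k := key t
      rw [H t, sub_self] at k
      have hcoef : 0 < 3 * (f t)^2 / (8 * f t ^ ((1:ℝ)/2)) := by
        have hu : 0 < f t ^ ((1:ℝ)/2) := Real.rpow_pos_of_pos (hfpos t) _
        have := hfpos t
        positivity
      rcases mul_eq_zero.mp k.symm with h | h
      · exact absurd h hcoef.ne'
      · linarith
  refine ⟨hiff, fun H => ?_⟩
  have W : ∀ t, deriv (deriv (fun s => f s ^ ((3:ℝ)/2))) t = 3 / 8 * l * f t ^ ((3:ℝ)/2) :=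
    hiff.mp H
  -- pack ODE data
  have hW1 : ∀ t, HasDerivAt (fun t => (3:ℝ)/2 * (f t ^ ((1:ℝ)/2) * deriv f t))
      (3 / 8 * l * (f t ^ ((3:ℝ)/2))) t := by
    intro t
    have h := hw2 t
    have e : (3:ℝ)/2 * ((1:ℝ)/2 * (f t ^ ((1:ℝ)/2))⁻¹ * deriv f t * deriv f t
        + f t ^ ((1:ℝ)/2) * deriv (deriv f) t) = 3 / 8 * l * (f t ^ ((3:ℝ)/2)) := by
      rw [← hdd2 t]
      exact W t
    rw [e] at h
    exact h
  have hpow : ∀ x : ℝ, (f x ^ ((3:ℝ)/2)) ^ ((2:ℝ)/3) = f x := by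
    intro x
    rw [← Real.rpow_mul (hfpos x).le]
    norm_num
  refine ⟨?_, ?_, ?_⟩
  · -- l = 0
    rintro rfl
    refine ⟨f 0 ^ ((3:ℝ)/2), (3:ℝ)/2 * (f 0 ^ ((1:ℝ)/2) * deriv f 0), fun t => ?_⟩
    have sol := lin_ode14 (3/8 * 0) (fun s => f s ^ ((3:ℝ)/2))
      (fun t => (3:ℝ)/2 * (f t ^ ((1:ℝ)/2) * deriv f t))
      (fun t => (3:ℝ)/2 * (f 0 ^ ((1:ℝ)/2) * deriv f 0) * t + f 0 ^ ((3:ℝ)/2))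
      (fun _ => (3:ℝ)/2 * (f 0 ^ ((1:ℝ)/2) * deriv f 0))
      hw1 (fun t => by simpa using hW1 t)
      (fun t => by
        simpa using ((hasDerivAt_id t).const_mul
          ((3:ℝ)/2 * (f 0 ^ ((1:ℝ)/2) * deriv f 0))).add_const (f 0 ^ ((3:ℝ)/2)))
      (fun t => by simpa using hasDerivAt_const t ((3:ℝ)/2 * (f 0 ^ ((1:ℝ)/2) * deriv f 0)))
      (by simp) (by simp)
    rw [← hpow t]
    exact congrArg (fun x => x ^ ((2:ℝ)/3)) (sol t)
  · -- l > 0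
    intro hl
    set k : ℝ := Real.sqrt (3 * l / 8) with hkdef
    have hk : 0 < k := Real.sqrt_pos.2 (by linarith)
    have hk2 : (3:ℝ) / 8 * l = k * k := by
      rw [hkdef, Real.mul_self_sqrt (by linarith)]
      ring
    refine ⟨(f 0 ^ ((3:ℝ)/2) + (3:ℝ)/2 * (f 0 ^ ((1:ℝ)/2) * deriv f 0) / k) / 2,
      (f 0 ^ ((3:ℝ)/2) - (3:ℝ)/2 * (f 0 ^ ((1:ℝ)/2) * deriv f 0) / k) / 2, fun t => ?_⟩
    set c1 : ℝ := (f 0 ^ ((3:ℝ)/2) + (3:ℝ)/2 * (f 0 ^ ((1:ℝ)/2) * deriv f 0) / k) / 2 with hc1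
    set c2 : ℝ := (f 0 ^ ((3:ℝ)/2) - (3:ℝ)/2 * (f 0 ^ ((1:ℝ)/2) * deriv f 0) / k) / 2 with hc2
    have sol := lin_ode14 (3/8 * l) (fun s => f s ^ ((3:ℝ)/2))
      (fun t => (3:ℝ)/2 * (f t ^ ((1:ℝ)/2) * deriv f t))
      (fun t => c1 * Real.exp (k * t) + c2 * Real.exp (-k * t))
      (fun t => c1 * k * Real.exp (k * t) - c2 * k * Real.exp (-k * t))
      hw1 (fun t => by simpa using hW1 t)
      (fun t => by
        have h := ((((hasDerivAt_id t).const_mul k).exp).const_mul c1).add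
          ((((hasDerivAt_id t).const_mul (-k)).exp).const_mul c2)
        refine h.congr_deriv ?_
        simp only [id_eq, mul_one, neg_mul]
        ring)
      (fun t => by
        have h := ((((hasDerivAt_id t).const_mul k).exp).const_mul (c1 * k)).sub
          ((((hasDerivAt_id t).const_mul (-k)).exp).const_mul (c2 * k))
        refine h.congr_deriv ?_
        simp only [id_eq, mul_one, neg_mul]
        rw [hk2]
        ring)
      (by
        simp only [mul_zero, neg_zero, Real.exp_zero, mul_one, hc1, hc2]
        ring)
      (by
        simp only [mul_zero, neg_zero, Real.exp_zero, mul_one, hc1, hc2]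
        field_simp
        ring)
    rw [← hpow t]
    exact congrArg (fun x => x ^ ((2:ℝ)/3)) (sol t)
  · -- l < 0
    intro hl
    set k : ℝ := Real.sqrt (-(3 * l) / 8) with hkdef
    have hk : 0 < k := Real.sqrt_pos.2 (by linarith)
    have hk2 : (3:ℝ) / 8 * l = -(k * k) := by
      rw [hkdef, Real.mul_self_sqrt (by linarith)]
      ring
    refine ⟨f 0 ^ ((3:ℝ)/2), (3:ℝ)/2 * (f 0 ^ ((1:ℝ)/2) * deriv f 0) / k, fun t => ?_⟩
    set c1 : ℝ := f 0 ^ ((3:ℝ)/2) with hc1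
    set c2 : ℝ := (3:ℝ)/2 * (f 0 ^ ((1:ℝ)/2) * deriv f 0) / k with hc2
    have sol := lin_ode14 (3/8 * l) (fun s => f s ^ ((3:ℝ)/2))
      (fun t => (3:ℝ)/2 * (f t ^ ((1:ℝ)/2) * deriv f t))
      (fun t => c1 * Real.cos (k * t) + c2 * Real.sin (k * t))
      (fun t => -(c1 * k) * Real.sin (k * t) + c2 * k * Real.cos (k * t))
      hw1 (fun t => by simpa using hW1 t)
      (fun t => by
        have h := ((((hasDerivAt_id t).const_mul k).cos).const_mul c1).add
          ((((hasDerivAt_id t).const_mul k).sin).const_mul c2)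
        refine h.congr_deriv ?_
        simp only [id_eq, mul_one]
        ring)
      (fun t => by
        have h := ((((hasDerivAt_id t).const_mul k).sin).const_mul (-(c1 * k))).add
          ((((hasDerivAt_id t).const_mul k).cos).const_mul (c2 * k))
        refine h.congr_deriv ?_
        simp only [id_eq, mul_one]
        rw [hk2]
        ring)
      (by
        simp only [mul_zero, Real.cos_zero, Real.sin_zero, mul_one, hc1]
        ring)
      (by
        simp only [mul_zero, Real.cos_zero, Real.sin_zero, mul_one, mul_zero, hc2]
        field_simp
        ring)
    rw [← hpow t]
    exact congrArg (fun x => x ^ ((2:ℝ)/3)) (sol t)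
end

section
/- Let $f:\mathbb{R}\to\mathbb{R}$ be smooth and positive and $\lambda_0 \in \mathbb{R}$. Setting $w = f^{3/2}$, the equation $4\frac{f''}{f} + 4\frac{f'}{f} + 2\frac{(f')^2}{f^2} = \lambda_0$ is equivalent to $w'' + w' = \frac{3}{8}\lambda_0 w$. Consequently: if $\lambda_0 = -\frac{2}{3}$ then $f(t) = (c_1 e^{-t/2} + c_2 t e^{-t/2})^{2/3}$; if $\lambda_0 > -\frac{2}{3}$ then $f(t) = (c_1 e^{r_+ t} + c_2 e^{r_- t})^{2/3}$ with $r_\pm = \frac{-1 \pm \sqrt{1 + \frac{3}{2}\lambda_0}}{2}$; if $\lambda_0 < -\frac{2}{3}$ then $f(t) = (e^{-t/2}(c_1 \cos(\mu t) + c_2 \sin(\mu t)))^{2/3}$ with $\mu = \frac{\sqrt{-(1+\frac{3}{2}\lambda_0)}}{2}$, wherever the inner expression is positive. -/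
lemma aux_const (F : ℝ → ℝ) (h : ∀ t, HasDerivAt F 0 t) : ∀ t, F t = F 0 :=
  fun t => is_const_of_deriv_eq_zero (fun x => (h x).differentiableAt) (fun x => (h x).deriv) t 0

lemma aux_exp (r t : ℝ) : HasDerivAt (fun t => Real.exp (r * t)) (r * Real.exp (r * t)) t := by
  exact ((Real.hasDerivAt_exp (r*t)).comp t ((hasDerivAt_id t).const_mul r)).congr_deriv (by ring)

lemma aux_cos (r t : ℝ) : HasDerivAt (fun t => Real.cos (r * t)) (-(r * Real.sin (r * t))) t := by
  exact ((Real.hasDerivAt_cos (r*t)).comp t ((hasDerivAt_id t).const_mul r)).congr_deriv (by ring)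

lemma aux_sin (r t : ℝ) : HasDerivAt (fun t => Real.sin (r * t)) (r * Real.cos (r * t)) t := by
  exact ((Real.hasDerivAt_sin (r*t)).comp t ((hasDerivAt_id t).const_mul r)).congr_deriv (by ring)

lemma aux_first_order (g g' : ℝ → ℝ) (h1 : ∀ t, HasDerivAt g (g' t) t) (r : ℝ)
    (h : ∀ t, g' t = r * g t) : ∀ t, g t = g 0 * Real.exp (r * t) := by
  have hF : ∀ t, HasDerivAt (fun t => g t * Real.exp (-r * t)) 0 t := by
    intro t
    have := (h1 t).mul (aux_exp (-r) t)
    refine HasDerivAt.congr_deriv this (Eq.symm ?_)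
    rw [h t]; ring
  have hc := aux_const _ hF
  intro t
  have h0 : g t * Real.exp (-r * t) = g 0 := by
    have := hc t; rw [this]; norm_num
  have he : Real.exp (-r * t) * Real.exp (r*t) = 1 := by
    rw [← Real.exp_add]; norm_num
  calc g t = g t * (Real.exp (-r*t) * Real.exp (r*t)) := by rw [he]; ring
  _ = (g t * Real.exp (-r*t)) * Real.exp (r*t) := by ring
  _ = g 0 * Real.exp (r*t) := by rw [h0]

lemma solve_distinct (w w1 w2 : ℝ → ℝ)
    (h1 : ∀ t, HasDerivAt w (w1 t) t) (h2 : ∀ t, HasDerivAt w1 (w2 t) t)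
    (r1 r2 c : ℝ) (hsum : r1 + r2 = -1) (hprod : r1 * r2 = -c) (hne : r1 ≠ r2)
    (hode : ∀ t, w2 t + w1 t = c * w t) :
    ∃ c1 c2 : ℝ, ∀ t, w t = c1 * Real.exp (r1 * t) + c2 * Real.exp (r2 * t) := by
  set g : ℝ → ℝ := fun t => w1 t - r2 * w t with hg
  have hg1 : ∀ t, HasDerivAt g (w2 t - r2 * w1 t) t := fun t => (h2 t).sub ((h1 t).const_mul r2)
  have hgl : ∀ t, w2 t - r2 * w1 t = r1 * g t := by
    intro t
    have := hode t
    simp only [hg]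
    linear_combination this - w1 t * hsum + w t * hprod
  have hgsol := aux_first_order g _ hg1 r1 hgl
  set K : ℝ := g 0 / (r1 - r2) with hK
  have hne' : r1 - r2 ≠ 0 := sub_ne_zero.mpr hne
  have hF : ∀ t, HasDerivAt (fun t => w t * Real.exp (-r2 * t) - K * Real.exp ((r1 - r2) * t)) 0 t := by
    intro t
    have hd := ((h1 t).mul (aux_exp (-r2) t)).sub ((aux_exp (r1 - r2) t).const_mul K)
    refine HasDerivAt.congr_deriv hd (Eq.symm ?_)
    have h3 : Real.exp ((r1 - r2) * t) = Real.exp (r1 * t) * Real.exp (-r2 * t) := by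
      rw [← Real.exp_add]; ring_nf
    have h4 : w1 t - r2 * w t = g 0 * Real.exp (r1 * t) := hgsol t
    have hKg : K * (r1 - r2) = g 0 := by rw [hK]; field_simp
    rw [h3]
    linear_combination (-Real.exp (-r2*t)) * h4 + (Real.exp (r1*t) * Real.exp (-r2*t)) * hKg
  have hc := aux_const _ hF
  refine ⟨K, w 0 - K, fun t => ?_⟩
  have h0 : w t * Real.exp (-r2 * t) - K * Real.exp ((r1 - r2) * t) = w 0 - K := by
    have := hc t; rw [this]; norm_num
  have he : Real.exp (-r2 * t) * Real.exp (r2 * t) = 1 := by rw [← Real.exp_add]; norm_num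
  have h3 : Real.exp ((r1 - r2) * t) * Real.exp (r2 * t) = Real.exp (r1 * t) := by
    rw [← Real.exp_add]; ring_nf
  calc w t = w t * (Real.exp (-r2*t) * Real.exp (r2*t)) := by rw [he]; ring
  _ = (w t * Real.exp (-r2*t) - K * Real.exp ((r1-r2)*t)) * Real.exp (r2*t)
      + K * (Real.exp ((r1-r2)*t) * Real.exp (r2*t)) := by ring
  _ = (w 0 - K) * Real.exp (r2*t) + K * Real.exp (r1*t) := by rw [h0, h3]
  _ = _ := by ring

lemma solve_repeated (w w1 w2 : ℝ → ℝ)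
    (h1 : ∀ t, HasDerivAt w (w1 t) t) (h2 : ∀ t, HasDerivAt w1 (w2 t) t)
    (hode : ∀ t, w2 t + w1 t = -(1/4) * w t) :
    ∃ c1 c2 : ℝ, ∀ t, w t = c1 * Real.exp (-(1/2) * t) + c2 * t * Real.exp (-(1/2) * t) := by
  set g : ℝ → ℝ := fun t => w1 t + (1/2) * w t with hg
  have hg1 : ∀ t, HasDerivAt g (w2 t + (1/2) * w1 t) t := fun t => (h2 t).add ((h1 t).const_mul (1/2))
  have hgl : ∀ t, w2 t + (1/2) * w1 t = -(1/2) * g t := by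
    intro t; simp only [hg]; linear_combination hode t
  have hgsol := aux_first_order g _ hg1 (-(1/2)) hgl
  have hF : ∀ t, HasDerivAt (fun t => w t * Real.exp ((1/2) * t) - g 0 * t) 0 t := by
    intro t
    have hd := ((h1 t).mul (aux_exp (1/2) t)).sub ((hasDerivAt_id t).const_mul (g 0))
    refine HasDerivAt.congr_deriv hd (Eq.symm ?_)
    have h4 : w1 t + (1/2) * w t = g 0 * Real.exp (-(1/2) * t) := hgsol t
    have he : Real.exp (-(1/2) * t) * Real.exp ((1/2) * t) = 1 := by rw [← Real.exp_add]; norm_num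
    have h5 : (w1 t + (1/2) * w t) * Real.exp ((1/2)*t) = g 0 := by
      rw [h4]; rw [mul_assoc, he, mul_one]
    linear_combination -h5
  have hc := aux_const _ hF
  refine ⟨w 0, g 0, fun t => ?_⟩
  have h0 : w t * Real.exp ((1/2) * t) - g 0 * t = w 0 := by
    have := hc t; rw [this]; norm_num
  have he : Real.exp ((1/2) * t) * Real.exp (-(1/2) * t) = 1 := by rw [← Real.exp_add]; norm_num
  calc w t = w t * (Real.exp ((1/2)*t) * Real.exp (-(1/2)*t)) := by rw [he]; ring
  _ = (w t * Real.exp ((1/2)*t) - g 0 * t) * Real.exp (-(1/2)*t) + g 0 * t * Real.exp (-(1/2)*t) := by ring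
  _ = _ := by rw [h0]

lemma osc_zero (u u' : ℝ → ℝ) (μ : ℝ) (hμ : 0 < μ)
    (h1 : ∀ t, HasDerivAt u (u' t) t) (h2 : ∀ t, HasDerivAt u' (-(μ^2) * u t) t)
    (h0 : u 0 = 0) (h0' : u' 0 = 0) : ∀ t, u t = 0 := by
  have hF : ∀ t, HasDerivAt (fun t => μ^2 * (u t)^2 + (u' t)^2) 0 t := by
    intro t
    have hd := (((h1 t).pow 2).const_mul (μ^2)).add ((h2 t).pow 2)
    refine HasDerivAt.congr_deriv hd (Eq.symm ?_)
    ring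
  have hc := aux_const _ hF
  intro t
  have := hc t
  rw [h0, h0'] at this
  norm_num at this
  have hμ2 : 0 < μ^2 := by positivity
  have h6 : μ^2 * u t^2 ≤ 0 := by nlinarith [sq_nonneg (u' t)]
  have h7 : u t^2 ≤ 0 := by nlinarith [hμ2, h6, sq_nonneg (u t)]
  have h8 : u t^2 = 0 := le_antisymm h7 (sq_nonneg (u t))
  exact pow_eq_zero_iff (two_ne_zero) |>.mp h8

lemma solve_sin_cos (v v' : ℝ → ℝ) (μ : ℝ) (hμ : 0 < μ)
    (h1 : ∀ t, HasDerivAt v (v' t) t) (h2 : ∀ t, HasDerivAt v' (-(μ^2) * v t) t) :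
    ∀ t, v t = v 0 * Real.cos (μ*t) + (v' 0 / μ) * Real.sin (μ*t) := by
  set c1 := v 0
  set c2 := v' 0 / μ
  set u : ℝ → ℝ := fun t => v t - (c1 * Real.cos (μ*t) + c2 * Real.sin (μ*t)) with hu
  set u' : ℝ → ℝ := fun t => v' t - (-(c1 * μ * Real.sin (μ*t)) + c2 * μ * Real.cos (μ*t)) with hu'
  have hd1 : ∀ t, HasDerivAt u (u' t) t := by
    intro t
    have := (h1 t).sub (((aux_cos μ t).const_mul c1).add ((aux_sin μ t).const_mul c2))
    refine HasDerivAt.congr_deriv this (Eq.symm ?_)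
    simp only [hu']; ring
  have hd2 : ∀ t, HasDerivAt u' (-(μ^2) * u t) t := by
    intro t
    have := (h2 t).sub ((((aux_sin μ t).const_mul (c1*μ)).neg).add ((aux_cos μ t).const_mul (c2*μ)))
    refine HasDerivAt.congr_deriv this (Eq.symm ?_)
    simp only [hu]; ring
  have hz := osc_zero u u' μ hμ hd1 hd2 (by simp [hu, c1]) (by simp [hu', c2]; field_simp; ring)
  intro t
  have := hz t
  simp only [hu] at this
  linarith [this]

lemma solve_osc (w w1 w2 : ℝ → ℝ)
    (h1 : ∀ t, HasDerivAt w (w1 t) t) (h2 : ∀ t, HasDerivAt w1 (w2 t) t)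
    (μ : ℝ) (hμ : 0 < μ)
    (hode : ∀ t, w2 t + w1 t = (-(1/4) - μ^2) * w t) :
    ∃ c1 c2 : ℝ, ∀ t, w t = Real.exp (-t/2) * (c1 * Real.cos (μ*t) + c2 * Real.sin (μ*t)) := by
  set v : ℝ → ℝ := fun t => w t * Real.exp ((1/2) * t) with hv
  set v' : ℝ → ℝ := fun t => (w1 t + (1/2) * w t) * Real.exp ((1/2) * t) with hv'
  have hd1 : ∀ t, HasDerivAt v (v' t) t := by
    intro t
    have := (h1 t).mul (aux_exp (1/2) t)
    refine HasDerivAt.congr_deriv this (Eq.symm ?_)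
    simp only [hv']; ring
  have hd2 : ∀ t, HasDerivAt v' (-(μ^2) * v t) t := by
    intro t
    have := ((h2 t).add ((h1 t).const_mul (1/2))).mul (aux_exp (1/2) t)
    refine HasDerivAt.congr_deriv this (Eq.symm ?_)
    simp only [hv, Pi.add_apply]
    linear_combination (-(Real.exp ((1/2) * t))) * hode t
  have hsol := solve_sin_cos v v' μ hμ hd1 hd2
  refine ⟨v 0, v' 0 / μ, fun t => ?_⟩
  have he : Real.exp ((1/2) * t) * Real.exp (-t/2) = 1 := by
    rw [← Real.exp_add, show (1:ℝ)/2*t + -t/2 = 0 by ring, Real.exp_zero]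
  calc w t = w t * (Real.exp ((1/2)*t) * Real.exp (-t/2)) := by rw [he]; ring
  _ = v t * Real.exp (-t/2) := by simp only [hv]; ring
  _ = _ := by rw [hsol t]; ring

/-- Theorem 5.7: for smooth positive `f`, with `w = f^{3/2}`,
the equation `4f''/f + 4f'/f + 2(f')²/f² = λ₀` is equivalent to
`w'' + w' = (3/8)λ₀ w`; consequently the solutions have the stated forms. -/
theorem stmt_15 (f : ℝ → ℝ) (hf : ContDiff ℝ (⊤ : ℕ∞) f) (hfpos : ∀ t, 0 < f t) (l : ℝ) :
    ((∀ t, 4 * deriv (deriv f) t / f t + 4 * deriv f t / f t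
          + 2 * (deriv f t) ^ 2 / (f t) ^ 2 = l) ↔
      (∀ t, deriv (deriv (fun s => f s ^ ((3 : ℝ) / 2))) t
            + deriv (fun s => f s ^ ((3 : ℝ) / 2)) t
          = 3 / 8 * l * f t ^ ((3 : ℝ) / 2))) ∧
    ((∀ t, 4 * deriv (deriv f) t / f t + 4 * deriv f t / f t
          + 2 * (deriv f t) ^ 2 / (f t) ^ 2 = l) →
      ((l = -(2 / 3) → ∃ c1 c2 : ℝ, ∀ t, f t =
          (c1 * Real.exp (-t / 2) + c2 * t * Real.exp (-t / 2)) ^ ((2 : ℝ) / 3)) ∧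
       (-(2 / 3) < l → ∃ c1 c2 : ℝ, ∀ t, f t =
          (c1 * Real.exp ((-1 + Real.sqrt (1 + 3 / 2 * l)) / 2 * t)
            + c2 * Real.exp ((-1 - Real.sqrt (1 + 3 / 2 * l)) / 2 * t)) ^ ((2 : ℝ) / 3)) ∧
       (l < -(2 / 3) → ∃ c1 c2 : ℝ, ∀ t, f t =
          (Real.exp (-t / 2) *
            (c1 * Real.cos (Real.sqrt (-(1 + 3 / 2 * l)) / 2 * t)
              + c2 * Real.sin (Real.sqrt (-(1 + 3 / 2 * l)) / 2 * t))) ^ ((2 : ℝ) / 3)))) := by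
  have hfd : Differentiable ℝ f := hf.differentiable (by simp)
  have hfd' : Differentiable ℝ (deriv f) := by
    have h2 : ContDiff ℝ ((⊤ : ℕ∞) : WithTop ℕ∞) f := hf.of_le (by simp)
    exact (contDiff_infty_iff_deriv.mp h2).2.differentiable (by simp)
  set w : ℝ → ℝ := fun s => f s ^ ((3 : ℝ) / 2) with hw
  set w1 : ℝ → ℝ := fun t => 3/2 * f t ^ ((1:ℝ)/2) * deriv f t with hw1
  set w2 : ℝ → ℝ := fun t =>
    3/2 * (1/2 * f t ^ (-((1:ℝ)/2)) * deriv f t) * deriv f t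
      + 3/2 * f t ^ ((1:ℝ)/2) * deriv (deriv f) t with hw2
  have h1 : ∀ t, HasDerivAt w (w1 t) t := by
    intro t
    have hr := Real.hasDerivAt_rpow_const (x := f t) (p := (3:ℝ)/2) (Or.inl (hfpos t).ne')
    have hc : HasDerivAt w ((3:ℝ)/2 * f t ^ ((3:ℝ)/2 - 1) * deriv f t) t :=
      hr.comp t (hfd t).hasDerivAt
    convert hc using 1
    rw [show (3:ℝ)/2 - 1 = 1/2 by norm_num]
  have h2 : ∀ t, HasDerivAt w1 (w2 t) t := by
    intro t
    have hr := Real.hasDerivAt_rpow_const (x := f t) (p := (1:ℝ)/2) (Or.inl (hfpos t).ne')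
    have ha : HasDerivAt (fun s => f s ^ ((1:ℝ)/2)) ((1:ℝ)/2 * f t ^ ((1:ℝ)/2 - 1) * deriv f t) t :=
      hr.comp t (hfd t).hasDerivAt
    have hb := (ha.const_mul ((3:ℝ)/2)).mul ((hfd' t).hasDerivAt)
    refine HasDerivAt.congr_deriv hb (Eq.symm ?_)
    rw [show (1:ℝ)/2 - 1 = -(1/2) by norm_num]
  have hderiv1 : deriv w = w1 := funext fun t => (h1 t).deriv
  have hderiv2 : ∀ t, deriv (deriv w) t = w2 t := by
    intro t; rw [hderiv1]; exact (h2 t).deriv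
  have key : ∀ t, w2 t + w1 t
      = 3/8 * (4 * deriv (deriv f) t / f t + 4 * deriv f t / f t
          + 2 * (deriv f t) ^ 2 / (f t) ^ 2) * w t := by
    intro t
    have ha : (0:ℝ) < f t := hfpos t
    have hb : 0 < f t ^ ((1:ℝ)/2) := Real.rpow_pos_of_pos ha _
    have hb2 : (f t ^ ((1:ℝ)/2))^2 = f t := by
      rw [← Real.rpow_natCast (f t ^ ((1:ℝ)/2)) 2, ← Real.rpow_mul ha.le]; norm_num
    have h32 : f t ^ ((3:ℝ)/2) = f t * f t ^ ((1:ℝ)/2) := by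
      rw [show (3:ℝ)/2 = 1 + 1/2 by norm_num, Real.rpow_add ha, Real.rpow_one]
    have hneg : f t ^ (-((1:ℝ)/2)) = (f t ^ ((1:ℝ)/2))⁻¹ := by
      rw [Real.rpow_neg ha.le]
    simp only [hw, hw1, hw2, h32, hneg]
    set b := f t ^ ((1:ℝ)/2) with hbdef
    rw [← hb2]
    field_simp
    ring
  have hwpos : ∀ t, 0 < w t := fun t => Real.rpow_pos_of_pos (hfpos t) _
  have hfw : ∀ t, f t = w t ^ ((2:ℝ)/3) := by
    intro t
    simp only [hw]
    rw [← Real.rpow_mul (hfpos t).le]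
    norm_num
  constructor
  · constructor
    · intro hL t
      rw [hderiv2 t, hderiv1, key t, hL t]
    · intro hODE t
      have h := hODE t
      rw [hderiv2 t, hderiv1, key t] at h
      have hz : ((4 * deriv (deriv f) t / f t + 4 * deriv f t / f t
          + 2 * (deriv f t) ^ 2 / (f t) ^ 2) - l) * (3/8 * w t) = 0 := by
        linear_combination h
      rcases mul_eq_zero.mp hz with h' | h'
      · exact sub_eq_zero.mp h'
      · exact absurd h' (by have := hwpos t; positivity)
  · intro hL
    have hODE : ∀ t, w2 t + w1 t = (3/8*l) * w t := by
      intro t; rw [key t, hL t]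
    refine ⟨?_, ?_, ?_⟩
    · intro hl
      obtain ⟨c1, c2, hsol⟩ := solve_repeated w w1 w2 h1 h2
        (by intro t; rw [hODE t, hl]; ring)
      refine ⟨c1, c2, fun t => ?_⟩
      rw [hfw t, hsol t]
      ring_nf
    · intro hl
      have hpos : (0:ℝ) < 1 + 3/2*l := by linarith
      have hs2 : Real.sqrt (1 + 3/2*l) ^ 2 = 1 + 3/2*l := Real.sq_sqrt hpos.le
      have hspos : 0 < Real.sqrt (1 + 3/2*l) := Real.sqrt_pos.mpr hpos
      obtain ⟨c1, c2, hsol⟩ := solve_distinct w w1 w2 h1 h2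
        ((-1 + Real.sqrt (1 + 3/2*l))/2) ((-1 - Real.sqrt (1 + 3/2*l))/2) (3/8*l)
        (by ring) (by linear_combination (-(1:ℝ)/4) * hs2)
        (by
          intro h
          have hz : Real.sqrt (1 + 3/2*l) = 0 := by linarith
          exact hspos.ne' hz) hODE
      exact ⟨c1, c2, fun t => by rw [hfw t, hsol t]⟩
    · intro hl
      have hpos : (0:ℝ) < -(1 + 3/2*l) := by linarith
      have hs2 : Real.sqrt (-(1 + 3/2*l)) ^ 2 = -(1 + 3/2*l) := Real.sq_sqrt hpos.le
      have hμ : 0 < Real.sqrt (-(1 + 3/2*l)) / 2 :=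
        div_pos (Real.sqrt_pos.mpr hpos) two_pos
      obtain ⟨c1, c2, hsol⟩ := solve_osc w w1 w2 h1 h2 (Real.sqrt (-(1 + 3/2*l))/2) hμ
        (by intro t; rw [hODE t]; linear_combination ((w t)/4) * hs2)
      exact ⟨c1, c2, fun t => by rw [hfw t, hsol t]⟩
end
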